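/- Consider the polytope P ⊆ ℝ^{10} in variables x_1,x_2,x_3,x_4, y_{123}, y_{234}, y_{134}, y_{12}, y_{23}, y_{13} defined by the McCormick systems for the bilinear equations y_{12} = x_1x_2, y_{123} = y_{12}x_3, y_{23} = x_2x_3, y_{234} = y_{23}x_4, y_{13} = x_1x_3, y_{134} = y_{13}x_4; i.e., for each listed equation w = uv, the inequalities w ≥ 0, w ≥ u + v − 1, w ≤ u, w ≤ v. The maximum of −y_{123} + y_{234} + y_{134} over P equals 4/3. -/

import Mathlib

open Finset

/-- A hypergraph: a finite set of nodes together with a set of edges,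
each a subset of the nodes of cardinality at least two. -/
structure HGraph (α : Type*) [DecidableEq α] where
  V : Finset α
  E : Finset (Finset α)
  edge_sub : ∀ e ∈ E, e ⊆ V
  edge_card : ∀ e ∈ E, 2 ≤ e.card

section Defs

variable {α : Type*} [DecidableEq α]

/-- Membership in the multilinear set `S_G`; a point is encoded as a single function
`z : Finset α → ℝ`, with node variables `z {v}` and edge variables `z e`. -/
def MultilinearSet (G : HGraph α) (z : Finset α → ℝ) : Prop :=
  (∀ v ∈ G.V, z {v} = 0 ∨ z {v} = 1) ∧ ∀ e ∈ G.E, z e = ∏ v ∈ e, z {v}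

/-- Membership in the standard linearization `MP^LP_G`. -/
def StdLin (G : HGraph α) (z : Finset α → ℝ) : Prop :=
  (∀ v ∈ G.V, z {v} ≤ 1) ∧
    ∀ e ∈ G.E, 0 ≤ z e ∧ (∑ v ∈ e, z {v}) - (e.card : ℝ) + 1 ≤ z e ∧ ∀ v ∈ e, z e ≤ z {v}

/-- The (extended) flower inequality centered at `e₀` with set of neighbors `T`. -/
def ExtFlowerIneq (z : Finset α → ℝ) (e₀ : Finset α) (T : Finset (Finset α)) : Prop :=
  (∑ v ∈ e₀ \ T.biUnion id, z {v}) + (∑ e ∈ T, z e) - z e₀ ≤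
    ((e₀ \ T.biUnion id).card : ℝ) + (T.card : ℝ) - 1

/-- `T` is a valid set of neighbors for an extended flower inequality centered at `e₀`:
a nonempty set of edges, distinct from `e₀`, adjacent to `e₀`, with `γ_i ≥ 2` for all `i ∈ T`. -/
def ValidEFNeighbors (G : HGraph α) (e₀ : Finset α) (T : Finset (Finset α)) : Prop :=
  T.Nonempty ∧ (∀ e ∈ T, e ∈ G.E ∧ e ≠ e₀ ∧ (e ∩ e₀).Nonempty) ∧
    ∀ i ∈ T, 2 ≤ ((e₀ ∩ i) \ (T.erase i).biUnion (fun j => e₀ ∩ j)).card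

/-- Membership in the extended flower relaxation `MP^EF_G`. -/
def MPEF (G : HGraph α) (z : Finset α → ℝ) : Prop :=
  StdLin G z ∧ ∀ e₀ ∈ G.E, ∀ T : Finset (Finset α), ValidEFNeighbors G e₀ T → ExtFlowerIneq z e₀ T

/-- `T` is a valid set of neighbors for a flower inequality centered at `e₀`. -/
def ValidFlowerNeighbors (G : HGraph α) (e₀ : Finset α) (T : Finset (Finset α)) : Prop :=
  T.Nonempty ∧ (∀ e ∈ T, e ∈ G.E ∧ e ≠ e₀ ∧ 2 ≤ (e₀ ∩ e).card) ∧
    ∀ i ∈ T, ∀ j ∈ T, i ≠ j → e₀ ∩ i ∩ j = ∅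

/-- Membership in the flower relaxation `MP^F_G`. -/
def MPF (G : HGraph α) (z : Finset α → ℝ) : Prop :=
  StdLin G z ∧ ∀ e₀ ∈ G.E, ∀ T : Finset (Finset α), ValidFlowerNeighbors G e₀ T → ExtFlowerIneq z e₀ T

/-- A recursive McCormick relaxation (RMC) of the multilinear set `S_G`:
a set `Ebar` of artificial edges together with, for each `f ∈ E ∪ Ebar`,
a partition `f = J f ∪ K f` into two disjoint nonempty parts, each a singleton
or an element of `E ∪ Ebar`, such that every artificial edge is reachable from some
edge of `E` by iteratively passing to non-singleton parts. -/
structure RMC {α : Type*} [DecidableEq α] (G : HGraph α) where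
  Ebar : Finset (Finset α)
  ebar_sub : ∀ f ∈ Ebar, f ⊆ G.V
  ebar_card : ∀ f ∈ Ebar, 2 ≤ f.card
  ebar_new : ∀ f ∈ Ebar, f ∉ G.E
  J : Finset α → Finset α
  K : Finset α → Finset α
  union_eq : ∀ f ∈ G.E ∪ Ebar, J f ∪ K f = f
  disj : ∀ f ∈ G.E ∪ Ebar, Disjoint (J f) (K f)
  J_ne : ∀ f ∈ G.E ∪ Ebar, (J f).Nonempty
  K_ne : ∀ f ∈ G.E ∪ Ebar, (K f).Nonempty
  J_mem : ∀ f ∈ G.E ∪ Ebar, (J f).card = 1 ∨ J f ∈ G.E ∪ Ebar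
  K_mem : ∀ f ∈ G.E ∪ Ebar, (K f).card = 1 ∨ K f ∈ G.E ∪ Ebar
  reach : ∀ f ∈ Ebar, ∃ e ∈ G.E, Relation.ReflTransGen
    (fun a b => a ∈ G.E ∪ Ebar ∧ 2 ≤ b.card ∧ (b = J a ∨ b = K a)) e f

/-- One step of the recursive decomposition: passing from `a` to a non-singleton part of it. -/
def RMC.step {α : Type*} [DecidableEq α] {G : HGraph α} (M : RMC G) (a b : Finset α) : Prop :=
  a ∈ G.E ∪ M.Ebar ∧ 2 ≤ b.card ∧ (b = M.J a ∨ b = M.K a)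

/-- The recursive sequence `R_e` of `e`: all sets obtained from `e` by iteratively
passing to non-singleton parts of the partitions (with `e ∈ R_e`). -/
def RMC.Rseq {α : Type*} [DecidableEq α] {G : HGraph α} (M : RMC G) (e : Finset α) :
    Set (Finset α) :=
  {f | Relation.ReflTransGen M.step e f}

/-- The RMC is non-overlapping if the recursive sequences of distinct edges are disjoint. -/
def RMC.NonOverlapping {α : Type*} [DecidableEq α] {G : HGraph α} (M : RMC G) : Prop :=
  ∀ e ∈ G.E, ∀ e' ∈ G.E, e ≠ e' → M.Rseq e ∩ M.Rseq e' = ∅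

/-- The point `w` (including artificial coordinates) satisfies all McCormick
inequalities of the RMC. -/
def RMC.McCormick {α : Type*} [DecidableEq α] {G : HGraph α} (M : RMC G)
    (w : Finset α → ℝ) : Prop :=
  ∀ f ∈ G.E ∪ M.Ebar,
    0 ≤ w f ∧ w (M.J f) + w (M.K f) - 1 ≤ w f ∧ w f ≤ w (M.J f) ∧ w f ≤ w (M.K f)

/-- Membership in `MP^RMC_G`, the projection of the RMC polytope onto the coordinates
indexed by `V ∪ E`: the point `z` admits an extension to the artificial variables
satisfying all McCormick inequalities of the RMC. -/
def RMC.MPRMC {α : Type*} [DecidableEq α] {G : HGraph α} (M : RMC G)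
    (z : Finset α → ℝ) : Prop :=
  ∃ w : Finset α → ℝ, (∀ v ∈ G.V, w {v} = z {v}) ∧ (∀ e ∈ G.E, w e = z e) ∧ M.McCormick w

/-- A flower partition `Te` of the edge `e`: a partition of `e` into pairwise disjoint
nonempty parts, each a singleton subset of `e` or an element of `R_e`, such that every
part lying in `Ebar` belongs to the recursive sequence of some other original edge. -/
def RMC.FlowerPartition {α : Type*} [DecidableEq α] {G : HGraph α} (M : RMC G)
    (e : Finset α) (Te : Finset (Finset α)) : Prop :=
  (∀ p ∈ Te, p.Nonempty) ∧
  (∀ p ∈ Te, ∀ q ∈ Te, p ≠ q → Disjoint p q) ∧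
  Te.biUnion id = e ∧
  (∀ p ∈ Te, (p.card = 1 ∧ p ⊆ e) ∨ p ∈ M.Rseq e) ∧
  ∀ p ∈ Te, p ∈ M.Ebar → ∃ e' ∈ G.E, e' ≠ e ∧ p ∈ M.Rseq e'

/-- The McCormick system for the bilinear equation `w = u * v` over the unit hypercube. -/
def McSys (u v w : ℝ) : Prop := 0 ≤ w ∧ u + v - 1 ≤ w ∧ w ≤ u ∧ w ≤ v

end Defs


/-!
Bounding `y₂₃₄ ≤ y₂₃` and `y₁₃₄ ≤ y₁₃` reduces the objective to `y₂₃ + y₁₃ - y₁₂₃`. The upper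
McCormick bounds give `3 (y₂₃ + y₁₃) ≤ 2 (x₁ + x₂ + x₃)`, and chaining the lower bounds of `y₁₂`
and `y₁₂₃` gives `x₁ + x₂ + x₃ ≤ y₁₂₃ + 2`; together with `y₁₂₃ ≥ 0` the objective is at most
`4/3`. Equality holds at `x₁ = x₂ = x₃ = 2/3`, `x₄ = 1`, with `y₁₂, y₁₂₃` on the lower envelope
`max 0 (u + v - 1)` and the other variables on the upper envelope `min u v`.
-/

section McSys

variable {u v w : ℝ}

theorem mcSys_of_eq_max (hu : u ∈ Set.Icc (0 : ℝ) 1) (hv : v ∈ Set.Icc (0 : ℝ) 1)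
    (hw : w = max 0 (u + v - 1)) : McSys u v w := by
  obtain ⟨hu₀, hu₁⟩ := hu
  obtain ⟨hv₀, hv₁⟩ := hv
  subst hw
  exact ⟨le_max_left _ _, le_max_right _ _, max_le hu₀ (by linarith), max_le hv₀ (by linarith)⟩

theorem mcSys_of_eq_min (hu : u ∈ Set.Icc (0 : ℝ) 1) (hv : v ∈ Set.Icc (0 : ℝ) 1)
    (hw : w = min u v) : McSys u v w := by
  obtain ⟨hu₀, hu₁⟩ := hu
  obtain ⟨hv₀, hv₁⟩ := hv
  subst hw
  refine ⟨le_min hu₀ hv₀, ?_, min_le_left _ _, min_le_right _ _⟩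
  rcases min_choice u v with h | h <;> rw [h] <;> linarith

theorem McSys.add_add_sub_two_le {x₁ x₂ x₃ y₁₂ y₁₂₃ : ℝ} (h₁₂ : McSys x₁ x₂ y₁₂)
    (h₁₂₃ : McSys y₁₂ x₃ y₁₂₃) : x₁ + x₂ + x₃ - 2 ≤ y₁₂₃ := by
  linarith [h₁₂.2.1, h₁₂₃.2.1]

theorem McSys.three_mul_add_le {x₁ x₂ x₃ y₂₃ y₁₃ : ℝ} (h₂₃ : McSys x₂ x₃ y₂₃)
    (h₁₃ : McSys x₁ x₃ y₁₃) : 3 * (y₂₃ + y₁₃) ≤ 2 * (x₁ + x₂ + x₃) := by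
  linarith [h₂₃.2.2.1, h₂₃.2.2.2, h₁₃.2.2.1, h₁₃.2.2.2]

end McSys

/-- the maximum of `-y₁₂₃ + y₂₃₄ + y₁₃₄` over the recursive McCormick
relaxation with recursive sequence `R¹` equals `4/3`. -/
theorem RMC_example_R1_max :
    IsGreatest {c : ℝ | ∃ x₁ x₂ x₃ x₄ y₁₂₃ y₂₃₄ y₁₃₄ y₁₂ y₂₃ y₁₃ : ℝ,
      McSys x₁ x₂ y₁₂ ∧ McSys y₁₂ x₃ y₁₂₃ ∧
      McSys x₂ x₃ y₂₃ ∧ McSys y₂₃ x₄ y₂₃₄ ∧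
      McSys x₁ x₃ y₁₃ ∧ McSys y₁₃ x₄ y₁₃₄ ∧
      c = -y₁₂₃ + y₂₃₄ + y₁₃₄} (4/3) := by
  constructor
  · exact ⟨2/3, 2/3, 2/3, 1, 0, 2/3, 2/3, 1/3, 2/3, 2/3,
      mcSys_of_eq_max (by norm_num) (by norm_num) (by norm_num),
      mcSys_of_eq_max (by norm_num) (by norm_num) (by norm_num),
      mcSys_of_eq_min (by norm_num) (by norm_num) (by norm_num),
      mcSys_of_eq_min (by norm_num) (by norm_num) (by norm_num),
      mcSys_of_eq_min (by norm_num) (by norm_num) (by norm_num),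
      mcSys_of_eq_min (by norm_num) (by norm_num) (by norm_num), by norm_num⟩
  · rintro c ⟨x₁, x₂, x₃, x₄, y₁₂₃, y₂₃₄, y₁₃₄, y₁₂, y₂₃, y₁₃,
      h₁₂, h₁₂₃, h₂₃, h₂₃₄, h₁₃, h₁₃₄, rfl⟩
    have hsum := h₁₂.add_add_sub_two_le h₁₂₃
    have hpairs := h₂₃.three_mul_add_le h₁₃
    linarith [h₁₂₃.1, h₂₃₄.2.2.1, h₁₃₄.2.2.1]
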